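/- arXiv:2102.10636 — 5 statements merged into one kernel-verified Lean document; each statement's English description precedes it below -/
import Mathlib

section
/- Consider the planar ODE system ẋ1 = −(4x1 + x1 x2² + x1 x2) + 2x2 + x2 x1² + 3x1 x2 and ẋ2 = −ẋ1. Then (1,1) is an equilibrium, and the function f(x1,x2) = ∫_1^{x1} ln(6t/(t²+3t+2)) dt + ∫_1^{x2} ln(6t/(t²+t+4)) dt satisfies: f(1,1) = 0, ∇f(1,1) = 0, the Hessian of f at (1,1) is positive definite, and the derivative of f along trajectories is ≤ 0 in ℝ²_{>0}, with equality only at points where 4x1 + x1 x2² + x1 x2 = 2x2 + x2 x1² + 3x1 x2. Consequently (1,1) is locally asymptotically stable on the line {x1 + x2 = 2}. -/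
/-!
The dissipation `-log (P / Q) * (P - Q)` is nonpositive because `log` is increasing. The gradient
of `f` at `(1, 1)` is the pair of integrands at `t = 1`, both `log 1 = 0`, and the Hessian is
diagonal with entries `1/6` and `1/2`.

For stability, a trajectory on the line `x₁ + x₂ = 2` is governed by `u = x₁` alone, with
`u' = -2 (u - 1) (u² - u + 2)`. Since `u² - u + 2 ≥ 7/4`, the square `(u - 1)²` decays at least like
`e^{-7t}`, so every such trajectory converges to `(1, 1)`, whatever its starting point.
-/

open Real Filter Topology Set

theorem log_div_mul_sub_pos {p q : ℝ} (hp : 0 < p) (hq : 0 < q) (hpq : p ≠ q) :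
    0 < log (p / q) * (p - q) := by
  rcases hpq.lt_or_gt with h | h
  · exact mul_pos_of_neg_of_neg (log_neg (div_pos hp hq) ((div_lt_one hq).2 h)) (sub_neg.2 h)
  · exact mul_pos (log_pos ((one_lt_div hq).2 h)) (sub_pos.2 h)

theorem neg_log_div_mul_sub_nonpos {p q : ℝ} (hp : 0 < p) (hq : 0 < q) :
    -log (p / q) * (p - q) ≤ 0 := by
  rcases eq_or_ne p q with rfl | hpq
  · simp
  · rw [neg_mul, neg_nonpos]
    exact (log_div_mul_sub_pos hp hq hpq).le

theorem neg_log_div_mul_sub_eq_zero_iff {p q : ℝ} (hp : 0 < p) (hq : 0 < q) :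
    -log (p / q) * (p - q) = 0 ↔ p = q := by
  refine ⟨fun h => by_contra fun hpq => ?_, fun h => by simp [h]⟩
  have := log_div_mul_sub_pos hp hq hpq
  linarith

theorem posDef_of_fin_two_diagonal {a b : ℝ} (ha : 0 < a) (hb : 0 < b) :
    (Matrix.of ![![a, 0], ![0, b]]).PosDef := by
  rw [← Matrix.diagonal_vec2]
  exact .diagonal fun i => by fin_cases i <;> assumption

theorem continuousOn_log_mul_div_quadratic {a b c : ℝ} (ha : 0 < a) (hb : 0 ≤ b) (hc : 0 < c) :
    ContinuousOn (fun t => log (c * t / (t ^ 2 + b * t + a))) (Ioi 0) := by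
  have hq : ∀ t ∈ Ioi (0 : ℝ), 0 < t ^ 2 + b * t + a := fun t (ht : 0 < t) => by positivity
  refine ContinuousOn.log (by fun_prop (disch := exact fun t ht => (hq t ht).ne')) fun t ht => ?_
  exact (div_pos (mul_pos hc ht) (hq t ht)).ne'

theorem hasDerivAt_log_mul_div_quadratic {a b c t : ℝ} (ha : 0 < a) (hb : 0 ≤ b) (hc : 0 < c)
    (ht : 0 < t) :
    HasDerivAt (fun t => log (c * t / (t ^ 2 + b * t + a)))
      (1 / t - (2 * t + b) / (t ^ 2 + b * t + a)) t := by
  have hq : 0 < t ^ 2 + b * t + a := by positivity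
  have hnum : HasDerivAt (fun t => c * t) c t := by simpa using (hasDerivAt_id t).const_mul c
  have hden : HasDerivAt (fun t => t ^ 2 + b * t + a) (2 * t + b) t := by
    simpa using ((hasDerivAt_pow 2 t).add ((hasDerivAt_id t).const_mul b)).add_const a
  convert (hnum.fun_div hden hq.ne').log (by positivity) using 1
  field_simp

theorem hasDerivAt_integral_right_of_continuousOn {g : ℝ → ℝ} {s : Set ℝ} {a b : ℝ}
    (hs : IsOpen s) (hg : ContinuousOn g s) (hab : uIcc a b ⊆ s) :
    HasDerivAt (fun u => ∫ t in a..u, g t) (g b) b := by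
  have hb : b ∈ s := hab right_mem_uIcc
  exact intervalIntegral.integral_hasDerivAt_right (hg.mono hab).intervalIntegrable
    (hg.stronglyMeasurableAtFilter hs b hb) (hg.continuousAt (hs.mem_nhds hb))

theorem le_mul_exp_neg_of_hasDerivAt_le {φ φ' : ℝ → ℝ} {k : ℝ}
    (hφ : ∀ t, 0 ≤ t → HasDerivAt φ (φ' t) t) (hle : ∀ t, 0 ≤ t → φ' t ≤ -k * φ t)
    {t : ℝ} (ht : 0 ≤ t) : φ t ≤ φ 0 * exp (-(k * t)) := by
  set ψ : ℝ → ℝ := fun s => φ s * exp (k * s)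
  have hψ : ∀ s, 0 ≤ s → HasDerivAt ψ ((φ' s + k * φ s) * exp (k * s)) s := fun s hs => by
    have hexp : HasDerivAt (fun s => exp (k * s)) (k * exp (k * s)) s := by
      simpa [mul_comm] using ((hasDerivAt_id s).const_mul k).exp
    exact ((hφ s hs).mul hexp).congr_deriv (by ring)
  have hanti : AntitoneOn ψ (Ici 0) := by
    refine antitoneOn_of_deriv_nonpos (convex_Ici 0)
      (fun s hs => (hψ s hs).continuousAt.continuousWithinAt)
      (fun s hs => (hψ s (interior_subset hs)).differentiableAt.differentiableWithinAt)
      fun s hs => ?_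
    rw [(hψ s (interior_subset hs)).deriv]
    exact mul_nonpos_of_nonpos_of_nonneg (by linarith [hle s (interior_subset hs)]) (exp_pos _).le
  have := hanti self_mem_Ici ht ht
  simp only [ψ, mul_zero, exp_zero, mul_one] at this
  rw [exp_neg, ← div_eq_mul_inv, le_div_iff₀ (exp_pos _)]
  exact this

theorem tendsto_of_sub_mul_deriv_le {u u' : ℝ → ℝ} {c k : ℝ} (hk : 0 < k)
    (hu : ∀ t, 0 ≤ t → HasDerivAt u (u' t) t)
    (hdecay : ∀ t, 0 ≤ t → (u t - c) * u' t ≤ -k * (u t - c) ^ 2) :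
    Tendsto u atTop (𝓝 c) := by
  have hsq : ∀ t, 0 ≤ t → (u t - c) ^ 2 ≤ (u 0 - c) ^ 2 * exp (-(2 * k * t)) :=
    fun t => le_mul_exp_neg_of_hasDerivAt_le (φ := fun t => (u t - c) ^ 2)
      (fun t ht => by simpa using ((hu t ht).sub_const c).fun_pow 2)
      (fun t ht => by nlinarith [hdecay t ht])
  have hbound : Tendsto (fun t => √((u 0 - c) ^ 2 * exp (-(2 * k * t)))) atTop (𝓝 0) := by
    have := ((tendsto_exp_neg_atTop_nhds_zero.comp
      (tendsto_id.const_mul_atTop (mul_pos two_pos hk))).const_mul ((u 0 - c) ^ 2)).sqrt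
    simpa using this
  rw [tendsto_iff_norm_sub_tendsto_zero]
  refine squeeze_zero' (Eventually.of_forall fun t => norm_nonneg _) ?_ hbound
  filter_upwards [eventually_ge_atTop 0] with t ht
  exact abs_le_sqrt (hsq t ht)

theorem HasDerivAt.fst {𝕜 E F : Type*} [NontriviallyNormedField 𝕜] [NormedAddCommGroup E]
    [NormedSpace 𝕜 E] [NormedAddCommGroup F] [NormedSpace 𝕜 F] {x : 𝕜 → E × F} {x' : E × F}
    {t : 𝕜} (h : HasDerivAt x x' t) : HasDerivAt (fun s => (x s).1) x'.1 t :=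
  (hasFDerivAt_fst (𝕜 := 𝕜) (p := x t)).comp_hasDerivAt t h

theorem tendsto_prod_of_tendsto_fst_of_add_eq {α : Type*} {l : Filter α} {x : α → ℝ × ℝ}
    {a b s : ℝ} (hfst : Tendsto (fun t => (x t).1) l (𝓝 a))
    (hsum : ∀ᶠ t in l, (x t).1 + (x t).2 = s) (hab : a + b = s) : Tendsto x l (𝓝 (a, b)) := by
  obtain rfl : b = s - a := by linarith
  refine (hfst.prodMk_nhds (tendsto_const_nhds.sub hfst)).congr' ?_
  filter_upwards [hsum] with t ht
  ext <;> simp only; linarith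

/-- Example: the two-species autocatalytic system
`ẋ1 = −(4x1 + x1 x2² + x1 x2) + 2x2 + x2 x1² + 3x1 x2`, `ẋ2 = −ẋ1`.
`(1,1)` is an equilibrium; `f(x1,x2) = ∫₁^{x1} ln(6t/(t²+3t+2)) dt +
∫₁^{x2} ln(6t/(t²+t+4)) dt` vanishes at `(1,1)` together with its gradient,
has positive definite Hessian there, decreases along trajectories (with
equality only where the forward and backward total rates coincide), and
consequently `(1,1)` is locally asymptotically stable on `{x1 + x2 = 2}`. -/
theorem aurora_example_lyapunov :
    let P : ℝ → ℝ → ℝ := fun x1 x2 => 4*x1 + x1*x2^2 + x1*x2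
    let Q : ℝ → ℝ → ℝ := fun x1 x2 => 2*x2 + x2*x1^2 + 3*x1*x2
    let f : ℝ → ℝ → ℝ := fun x1 x2 =>
      (∫ t in (1:ℝ)..x1, Real.log (6*t/(t^2+3*t+2))) +
      (∫ t in (1:ℝ)..x2, Real.log (6*t/(t^2+t+4)))
    (Q 1 1 - P 1 1 = 0) ∧
    f 1 1 = 0 ∧
    deriv (fun t => f t 1) 1 = 0 ∧
    deriv (fun t => f 1 t) 1 = 0 ∧
    (Matrix.of ![![deriv (fun t => Real.log (6*t/(t^2+3*t+2))) 1, 0],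
                 ![0, deriv (fun t => Real.log (6*t/(t^2+t+4))) 1]]).PosDef ∧
    (∀ x1 x2 : ℝ, 0 < x1 → 0 < x2 →
      -Real.log (P x1 x2 / Q x1 x2) * (P x1 x2 - Q x1 x2) ≤ 0 ∧
      (-Real.log (P x1 x2 / Q x1 x2) * (P x1 x2 - Q x1 x2) = 0 ↔
        P x1 x2 = Q x1 x2)) ∧
    ∃ δ > 0, ∀ x : ℝ → ℝ × ℝ,
      (∀ t, 0 ≤ t → 0 < (x t).1 ∧ 0 < (x t).2) →
      (∀ t, 0 ≤ t → (x t).1 + (x t).2 = 2) →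
      (∀ t, 0 ≤ t → HasDerivAt x
        (Q (x t).1 (x t).2 - P (x t).1 (x t).2,
         P (x t).1 (x t).2 - Q (x t).1 (x t).2) t) →
      dist (x 0) ((1 : ℝ), (1 : ℝ)) < δ →
      Filter.Tendsto x Filter.atTop (nhds ((1 : ℝ), (1 : ℝ))) := by
  intro P Q f
  have hI₁ : HasDerivAt (fun u => ∫ t in (1:ℝ)..u, log (6*t/(t^2+3*t+2))) 0 1 := by
    convert hasDerivAt_integral_right_of_continuousOn (a := 1) (b := 1) isOpen_Ioi
      (continuousOn_log_mul_div_quadratic (a := 2) (b := 3) (c := 6) (by norm_num) (by norm_num)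
        (by norm_num)) (by simp) using 1
    norm_num
  have hI₂ : HasDerivAt (fun u => ∫ t in (1:ℝ)..u, log (6*t/(t^2+t+4))) 0 1 := by
    convert hasDerivAt_integral_right_of_continuousOn (a := 1) (b := 1) isOpen_Ioi
      (continuousOn_log_mul_div_quadratic (a := 4) (b := 1) (c := 6) (by norm_num) (by norm_num)
        (by norm_num)) (by simp) using 1 <;> norm_num
  have hg₁ : HasDerivAt (fun t => log (6*t/(t^2+3*t+2))) (1/6) 1 := by
    convert hasDerivAt_log_mul_div_quadratic (a := 2) (b := 3) (c := 6) (by norm_num) (by norm_num)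
      (by norm_num) one_pos using 1
    norm_num
  have hg₂ : HasDerivAt (fun t => log (6*t/(t^2+t+4))) (1/2) 1 := by
    convert hasDerivAt_log_mul_div_quadratic (a := 4) (b := 1) (c := 6) (by norm_num) (by norm_num)
      (by norm_num) one_pos using 1 <;> norm_num
  refine ⟨by norm_num, by simp [f], (hI₁.add_const _).deriv,
    (hI₂.const_add _).deriv, ?_, fun x1 x2 h1 h2 => ?_, 1, one_pos, ?_⟩
  · rw [hg₁.deriv, hg₂.deriv]
    exact posDef_of_fin_two_diagonal (by norm_num) (by norm_num)
  · have hP : 0 < P x1 x2 := by positivity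
    have hQ : 0 < Q x1 x2 := by positivity
    exact ⟨neg_log_div_mul_sub_nonpos hP hQ, neg_log_div_mul_sub_eq_zero_iff hP hQ⟩
  · intro x _ hsum hx _
    have hfst : Tendsto (fun t => (x t).1) atTop (𝓝 1) := by
      refine tendsto_of_sub_mul_deriv_le (k := 7 / 2) (by norm_num) (fun t ht => (hx t ht).fst)
        fun t ht => ?_
      -- on the line, `Q - P = -2 (x₁ - 1) (x₁² - x₁ + 2)` and `x₁² - x₁ + 2 = (x₁ - 1/2)² + 7/4`
      have hx₂ : (x t).2 = 2 - (x t).1 := by linarith [hsum t ht]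
      simp only [P, Q, hx₂]
      nlinarith [sq_nonneg (((x t).1 - 1) * ((x t).1 - 1 / 2))]
    exact tendsto_prod_of_tendsto_fst_of_add_eq hfst (eventually_atTop.2 ⟨0, hsum⟩) (by norm_num)
end

section
/- Let f(x_i, x_j) = −∫_{x*_i}^{x_i} w_i^{-1} ln( t^a / (c Σ_{l∈R} k_l t^{v_{il}}) ) dt + ∫_{x*_j}^{x_j} w_j^{-1} ln( t^b / (c Σ_{l∈L} k_l t^{v_{jl}}) ) dt, where c = (x*_i)^a / Σ_{l∈R} k_l (x*_i)^{v_{il}} = (x*_j)^b / Σ_{l∈L} k_l (x*_j)^{v_{jl}}. Then ∇f(x*) = 0, and the Hessian of f is the diagonal matrix with entries −w_i^{-1} Σ_{l∈R} k_l (a − v_{il}) x_i^{v_{il}−1} / Σ_{l∈R} k_l x_i^{v_{il}} and w_j^{-1} Σ_{l∈L} k_l (b − v_{jl}) x_j^{v_{jl}−1} / Σ_{l∈L} k_l x_j^{v_{jl}}. Hence if w_i^{-1} Σ_{l∈R} k_l (a − v_{il}) (x*_i)^{v_{il}−1} < 0 and w_j^{-1} Σ_{l∈L} k_l (b − v_{jl})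 (x*_j)^{v_{jl}−1} > 0, then f is strictly convex in a neighborhood of x* and f(x) > 0 = f(x*) there for x ≠ x*. -/
/-! Both summands of `f` have the form `F s = ∫_{x₀}^s w log (u^a / (c ∑ k u^v)) du`. The choice
of `c` makes the integrand `F'` vanish at `x₀`, and `F'' = w ∑ k (a - v) u^(v-1) / ∑ k u^v`, which
the sign condition makes positive on a ball around `x₀`. There `F` is strictly convex with a
critical point at `x₀`, hence positive away from `x₀`, and a sum of strictly convex functions of
separate variables is strictly convex on the product of their domains. -/

open Real Set Filter Topology

theorem hasDerivAt_intervalIntegral_of_continuousOn {E : Type*} [NormedAddCommGroup E]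
    [NormedSpace ℝ E] [CompleteSpace E] {φ : ℝ → E} {U : Set ℝ} (hU : IsOpen U)
    (hφ : ContinuousOn φ U) {x₀ t : ℝ} (h : uIcc x₀ t ⊆ U) :
    HasDerivAt (fun s => ∫ u in x₀..s, φ u) (φ t) t :=
  intervalIntegral.integral_hasDerivAt_right ((hφ.mono h).intervalIntegrable)
    (hφ.stronglyMeasurableAtFilter hU t (h right_mem_uIcc))
    (hφ.continuousAt (hU.mem_nhds (h right_mem_uIcc)))

theorem deriv_deriv_eq_of_hasDerivAt {F φ : ℝ → ℝ} {U : Set ℝ} (hU : IsOpen U)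
    (hF : ∀ x ∈ U, HasDerivAt F (φ x) x) {t ψ : ℝ} (ht : t ∈ U) (hφ : HasDerivAt φ ψ t) :
    deriv (deriv F) t = ψ := by
  have hderiv : deriv F =ᶠ[𝓝 t] φ :=
    eventually_of_mem (hU.mem_nhds ht) fun x hx => (hF x hx).deriv
  rw [hderiv.deriv_eq, hφ.deriv]

theorem strictConvexOn_of_hasDerivAt_of_hasDerivAt_pos {F φ ψ : ℝ → ℝ} {U : Set ℝ}
    (hU : IsOpen U) (hUc : Convex ℝ U) (hF : ∀ x ∈ U, HasDerivAt F (φ x) x)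
    (hφ : ∀ x ∈ U, HasDerivAt φ (ψ x) x) (hψ : ∀ x ∈ U, 0 < ψ x) : StrictConvexOn ℝ U F := by
  have hmono : StrictMonoOn φ U := by
    refine strictMonoOn_of_hasDerivWithinAt_pos (f' := ψ) hUc
      (fun x hx => (hφ x hx).continuousAt.continuousWithinAt) (fun x hx => ?_) ?_
    · exact (hφ x (interior_subset hx)).hasDerivWithinAt
    · exact fun x hx => hψ x (interior_subset hx)
  refine StrictMonoOn.strictConvexOn_of_deriv hUc
    (fun x hx => (hF x hx).continuousAt.continuousWithinAt) ?_
  rw [hU.interior_eq]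
  exact hmono.congr fun x hx => ((hF x hx).deriv).symm

theorem StrictConvexOn.lt_of_hasDerivAt_zero {F : ℝ → ℝ} {S : Set ℝ}
    (hF : StrictConvexOn ℝ S F) {x₀ y : ℝ} (hx₀ : x₀ ∈ S) (hy : y ∈ S) (hne : y ≠ x₀)
    (hF₀ : HasDerivAt F 0 x₀) : F x₀ < F y := by
  rcases hne.lt_or_gt with hlt | hgt
  · have := hF.slope_lt_of_hasDerivAt hy hx₀ hlt hF₀
    rw [slope_def_field, div_neg_iff] at this
    rcases this with h | h <;> linarith [h.1, h.2]
  · have := hF.lt_slope_of_hasDerivAt hx₀ hy hgt hF₀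
    rw [slope_def_field, div_pos_iff] at this
    rcases this with h | h <;> linarith [h.1, h.2]

theorem StrictConvexOn.add_prod {E F : Type*} [AddCommGroup E] [Module ℝ E] [AddCommGroup F]
    [Module ℝ F] {s : Set E} {t : Set F} {g₁ : E → ℝ} {g₂ : F → ℝ}
    (h₁ : StrictConvexOn ℝ s g₁) (h₂ : StrictConvexOn ℝ t g₂) :
    StrictConvexOn ℝ (s ×ˢ t) (fun p => g₁ p.1 + g₂ p.2) := by
  refine ⟨h₁.1.prod h₂.1, fun p hp q hq hpq α β hα hβ hαβ => ?_⟩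
  simp only [Prod.fst_add, Prod.snd_add, Prod.smul_fst, Prod.smul_snd, smul_eq_mul]
  rcases eq_or_ne p.1 q.1 with h | h
  · have h' : p.2 ≠ q.2 := fun h' => hpq (Prod.ext h h')
    have A := h₁.convexOn.2 hp.1 hq.1 hα.le hβ.le hαβ
    have B := h₂.2 hp.2 hq.2 h' hα hβ hαβ
    simp only [smul_eq_mul] at A B
    linarith
  · have A := h₁.2 hp.1 hq.1 h hα hβ hαβ
    have B := h₂.convexOn.2 hp.2 hq.2 hα.le hβ.le hαβ
    simp only [smul_eq_mul] at A B
    linarith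

theorem add_pos_of_mem_prod_of_ne {α β : Type*} {s : Set α} {t : Set β} {g₁ : α → ℝ}
    {g₂ : β → ℝ} {x₀ : α} {y₀ : β} (h₁₀ : g₁ x₀ = 0) (h₂₀ : g₂ y₀ = 0)
    (h₁ : ∀ x ∈ s, x ≠ x₀ → 0 < g₁ x) (h₂ : ∀ y ∈ t, y ≠ y₀ → 0 < g₂ y) {p : α × β}
    (hp : p ∈ s ×ˢ t) (hne : p ≠ (x₀, y₀)) : 0 < g₁ p.1 + g₂ p.2 := by
  rcases eq_or_ne p.1 x₀ with h | h
  · rw [h, h₁₀, zero_add]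
    exact h₂ _ hp.2 fun h' => hne (Prod.ext h h')
  · refine add_pos_of_pos_of_nonneg (h₁ _ hp.1 h) ?_
    rcases eq_or_ne p.2 y₀ with h' | h'
    · rw [h', h₂₀]
    · exact (h₂ _ hp.2 h').le

section MassAction

variable {ι : Type*} [Fintype ι] (k : ι → ℝ) (v : ι → ℕ)

theorem sum_mul_pow_pos [Nonempty ι] (hk : ∀ l, 0 < k l) {t : ℝ} (ht : 0 < t) :
    0 < ∑ l, k l * t ^ v l :=
  Finset.sum_pos (fun l _ => mul_pos (hk l) (pow_pos ht _)) Finset.univ_nonempty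

theorem sum_mul_sub_mul_rpow_sub_one_mul (a : ℝ) {t : ℝ} (ht : t ≠ 0) :
    (∑ l, k l * (a - v l) * t ^ ((v l : ℝ) - 1)) * t =
      a * ∑ l, k l * t ^ v l - (∑ l, k l * v l * t ^ ((v l : ℝ) - 1)) * t := by
  simp only [Finset.sum_mul, Finset.mul_sum, ← Finset.sum_sub_distrib]
  refine Finset.sum_congr rfl fun l _ => ?_
  have hpow : t ^ ((v l : ℝ) - 1) * t = t ^ v l := by
    rw [rpow_sub_one ht, rpow_natCast, div_mul_cancel₀ _ ht]
  linear_combination k l * a * hpow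

theorem hasDerivAt_log_pow_div_sum [Nonempty ι] (hk : ∀ l, 0 < k l) (a : ℕ) {c t : ℝ}
    (hc : c ≠ 0) (ht : 0 < t) :
    HasDerivAt (fun u => log (u ^ a / (c * ∑ l, k l * u ^ v l)))
      ((∑ l, k l * ((a : ℝ) - v l) * t ^ ((v l : ℝ) - 1)) / ∑ l, k l * t ^ v l) t := by
  have hS : ∀ u, 0 < u → 0 < ∑ l, k l * u ^ v l := fun u hu => sum_mul_pow_pos k v hk hu
  have hlog : (fun u => a * log u - log c - log (∑ l, k l * u ^ v l)) =ᶠ[𝓝 t]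
      fun u => log (u ^ a / (c * ∑ l, k l * u ^ v l)) := by
    filter_upwards [Ioi_mem_nhds ht] with u hu
    rw [log_div (pow_pos hu a).ne' (mul_ne_zero hc (hS u hu).ne'), log_mul hc (hS u hu).ne',
      log_pow]
    ring
  have hpow : ∀ n : ℕ, HasDerivAt (fun u : ℝ => u ^ n) (n * t ^ ((n : ℝ) - 1)) t := fun n => by
    simpa [rpow_natCast] using hasDerivAt_rpow_const (p := n) (Or.inl ht.ne')
  have hsum : HasDerivAt (fun u => ∑ l, k l * u ^ v l)
      (∑ l, k l * (v l * t ^ ((v l : ℝ) - 1))) t :=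
    HasDerivAt.fun_sum fun l _ => (hpow (v l)).const_mul (k l)
  refine ((((hasDerivAt_log ht.ne').const_mul (a : ℝ)).sub_const (log c)).sub
    (hsum.log (hS t ht).ne')).congr_of_eventuallyEq hlog.symm |>.congr_deriv ?_
  have hS0 := (hS t ht).ne'
  field_simp
  linear_combination -sum_mul_sub_mul_rpow_sub_one_mul k v a ht.ne'

noncomputable def logRatioIntegral (a : ℕ) (c w x₀ s : ℝ) : ℝ :=
  ∫ u in x₀..s, w * log (u ^ a / (c * ∑ l, k l * u ^ v l))

theorem logRatioIntegral_self (a : ℕ) (c w x₀ : ℝ) : logRatioIntegral k v a c w x₀ x₀ = 0 :=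
  intervalIntegral.integral_same

variable [Nonempty ι]

theorem hasDerivAt_logRatioIntegral (hk : ∀ l, 0 < k l) {a : ℕ} {c x₀ t : ℝ} (w : ℝ)
    (hc : c ≠ 0) (hx₀ : 0 < x₀) (ht : 0 < t) :
    HasDerivAt (logRatioIntegral k v a c w x₀)
      (w * log (t ^ a / (c * ∑ l, k l * t ^ v l))) t :=
  hasDerivAt_intervalIntegral_of_continuousOn isOpen_Ioi
    (fun _ hu => ((hasDerivAt_log_pow_div_sum k v hk a hc hu).continuousAt.const_mul w)
      |>.continuousWithinAt)
    (ordConnected_Ioi.uIcc_subset hx₀ ht)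

theorem hasDerivAt_logRatioIntegral_self (hk : ∀ l, 0 < k l) {a : ℕ} {c x₀ : ℝ} (w : ℝ)
    (hx₀ : 0 < x₀) (hcx : c * ∑ l, k l * x₀ ^ v l = x₀ ^ a) :
    HasDerivAt (logRatioIntegral k v a c w x₀) 0 x₀ := by
  have hc : c ≠ 0 := left_ne_zero_of_mul (hcx ▸ (pow_pos hx₀ a).ne')
  simpa [hcx, (pow_pos hx₀ a).ne'] using hasDerivAt_logRatioIntegral k v hk (a := a) w hc hx₀ hx₀

theorem deriv_deriv_logRatioIntegral (hk : ∀ l, 0 < k l) {a : ℕ} {c x₀ t : ℝ} (w : ℝ)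
    (hc : c ≠ 0) (hx₀ : 0 < x₀) (ht : 0 < t) :
    deriv (deriv (logRatioIntegral k v a c w x₀)) t =
      w * (∑ l, k l * ((a : ℝ) - v l) * t ^ ((v l : ℝ) - 1)) / ∑ l, k l * t ^ v l := by
  rw [mul_div_assoc]
  exact deriv_deriv_eq_of_hasDerivAt isOpen_Ioi
    (fun _ hu => hasDerivAt_logRatioIntegral k v hk w hc hx₀ hu) ht
    ((hasDerivAt_log_pow_div_sum k v hk a hc ht).const_mul w)

theorem exists_ball_strictConvexOn_logRatioIntegral (hk : ∀ l, 0 < k l) {a : ℕ} {c w x₀ : ℝ}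
    (hx₀ : 0 < x₀) (hcx : c * ∑ l, k l * x₀ ^ v l = x₀ ^ a)
    (hsign : 0 < w * ∑ l, k l * ((a : ℝ) - v l) * x₀ ^ ((v l : ℝ) - 1)) :
    ∃ δ > 0, StrictConvexOn ℝ (Metric.ball x₀ δ) (logRatioIntegral k v a c w x₀) ∧
      ∀ s ∈ Metric.ball x₀ δ, s ≠ x₀ → 0 < logRatioIntegral k v a c w x₀ s := by
  have hc : c ≠ 0 := left_ne_zero_of_mul (hcx ▸ (pow_pos hx₀ a).ne')
  set ψ : ℝ → ℝ := fun t =>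
    w * ((∑ l, k l * ((a : ℝ) - v l) * t ^ ((v l : ℝ) - 1)) / ∑ l, k l * t ^ v l)
  have hψ : ContinuousAt ψ x₀ :=
    continuousAt_const.mul <| ContinuousAt.div (by fun_prop (disch := exact Or.inl hx₀.ne'))
      (by fun_prop) (sum_mul_pow_pos k v hk hx₀).ne'
  have hψ₀ : 0 < ψ x₀ := by
    simpa only [ψ, mul_div_assoc] using div_pos hsign (sum_mul_pow_pos k v hk hx₀)
  obtain ⟨δ, hδ, hball⟩ := Metric.eventually_nhds_iff_ball.1
    ((eventually_gt_nhds hx₀).and (hψ.eventually (eventually_gt_nhds hψ₀)))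
  have hconv : StrictConvexOn ℝ (Metric.ball x₀ δ) (logRatioIntegral k v a c w x₀) :=
    strictConvexOn_of_hasDerivAt_of_hasDerivAt_pos Metric.isOpen_ball (convex_ball x₀ δ)
      (fun t ht => hasDerivAt_logRatioIntegral k v hk w hc hx₀ (hball t ht).1)
      (fun t ht => (hasDerivAt_log_pow_div_sum k v hk a hc (hball t ht).1).const_mul w)
      (fun t ht => (hball t ht).2)
  refine ⟨δ, hδ, hconv, fun s hs hne => ?_⟩
  simpa only [logRatioIntegral_self] using hconv.lt_of_hasDerivAt_zero
    (Metric.mem_ball_self hδ) hs hne (hasDerivAt_logRatioIntegral_self k v hk w hx₀ hcx)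

end MassAction

theorem two_species_lyapunov_positive_definite_general
    (ιL ιR : Type) [Fintype ιL] [Fintype ιR] [Nonempty ιL] [Nonempty ιR]
    (kL : ιL → ℝ) (kR : ιR → ℝ) (hkL : ∀ l, 0 < kL l) (hkR : ∀ l, 0 < kR l)
    (wi wj : ℤ)
    (a b : ℕ) (vil : ιR → ℕ) (vjl : ιL → ℕ)
    (xi xj : ℝ) (hxi : 0 < xi) (hxj : 0 < xj)
    (c : ℝ)
    (hc1 : c = xi ^ a / ∑ l, kR l * xi ^ vil l)
    (hc2 : c = xj ^ b / ∑ l, kL l * xj ^ vjl l)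
    (f : ℝ × ℝ → ℝ)
    (hf : ∀ y : ℝ × ℝ, f y =
      -(∫ t in xi..y.1, (wi : ℝ)⁻¹ * Real.log (t ^ a / (c * ∑ l, kR l * t ^ vil l))) +
      (∫ t in xj..y.2, (wj : ℝ)⁻¹ * Real.log (t ^ b / (c * ∑ l, kL l * t ^ vjl l)))) :
    f (xi, xj) = 0 ∧
    deriv (fun t => f (t, xj)) xi = 0 ∧
    deriv (fun t => f (xi, t)) xj = 0 ∧
    -- Hessian: diagonal with the stated entries
    (∀ y2 t : ℝ, 0 < t →
      deriv (deriv (fun s => f (s, y2))) t =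
        -((wi : ℝ)⁻¹ * ∑ l, kR l * ((a : ℝ) - (vil l : ℝ)) * t ^ ((vil l : ℝ) - 1)) /
          (∑ l, kR l * t ^ vil l)) ∧
    (∀ y1 t : ℝ, 0 < t →
      deriv (deriv (fun s => f (y1, s))) t =
        ((wj : ℝ)⁻¹ * ∑ l, kL l * ((b : ℝ) - (vjl l : ℝ)) * t ^ ((vjl l : ℝ) - 1)) /
          (∑ l, kL l * t ^ vjl l)) ∧
    (∀ y1 t : ℝ, deriv (fun s => deriv (fun s' => f (s', s)) t) y1 = 0) ∧
    -- strict convexity / positivity under the sign conditions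
    ((wi : ℝ)⁻¹ * (∑ l, kR l * ((a : ℝ) - (vil l : ℝ)) * xi ^ ((vil l : ℝ) - 1)) < 0 →
     0 < (wj : ℝ)⁻¹ * (∑ l, kL l * ((b : ℝ) - (vjl l : ℝ)) * xj ^ ((vjl l : ℝ) - 1)) →
     ∃ ε > 0,
       StrictConvexOn ℝ
         (Metric.ball ((xi, xj) : ℝ × ℝ) ε ∩ {y : ℝ × ℝ | 0 < y.1 ∧ 0 < y.2}) f ∧
       ∀ y ∈ Metric.ball ((xi, xj) : ℝ × ℝ) ε ∩ {y : ℝ × ℝ | 0 < y.1 ∧ 0 < y.2},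
         y ≠ (xi, xj) → 0 < f y) := by
  have hcxi : c * ∑ l, kR l * xi ^ vil l = xi ^ a := by
    rw [hc1, div_mul_cancel₀ _ (sum_mul_pow_pos kR vil hkR hxi).ne']
  have hcxj : c * ∑ l, kL l * xj ^ vjl l = xj ^ b := by
    rw [hc2, div_mul_cancel₀ _ (sum_mul_pow_pos kL vjl hkL hxj).ne']
  have hc : c ≠ 0 := left_ne_zero_of_mul (hcxi ▸ (pow_pos hxi a).ne')
  set Fi := logRatioIntegral kR vil a c (-(wi : ℝ)⁻¹) xi
  set Fj := logRatioIntegral kL vjl b c (wj : ℝ)⁻¹ xj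
  obtain rfl : f = fun y => Fi y.1 + Fj y.2 := funext fun y => by
    simp only [hf, Fi, Fj, logRatioIntegral, neg_mul, intervalIntegral.integral_neg]
  refine ⟨by simp [Fi, Fj, logRatioIntegral_self], ?_, ?_, fun y2 t ht => ?_, fun y1 t ht => ?_,
    fun y1 t => by simp, fun hsi hsj => ?_⟩
  · simpa using (hasDerivAt_logRatioIntegral_self kR vil hkR _ hxi hcxi).deriv
  · simpa using (hasDerivAt_logRatioIntegral_self kL vjl hkL _ hxj hcxj).deriv
  · simpa [neg_mul] using
      deriv_deriv_logRatioIntegral kR vil hkR (a := a) (-(wi : ℝ)⁻¹) hc hxi ht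
  · simpa using deriv_deriv_logRatioIntegral kL vjl hkL _ hc hxj ht
  obtain ⟨δi, hδi, hconvi, hposi⟩ := exists_ball_strictConvexOn_logRatioIntegral kR vil hkR
    (w := -(wi : ℝ)⁻¹) hxi hcxi (by rw [neg_mul]; exact neg_pos.2 hsi)
  obtain ⟨δj, hδj, hconvj, hposj⟩ :=
    exists_ball_strictConvexOn_logRatioIntegral kL vjl hkL hxj hcxj hsj
  have hsub : Metric.ball ((xi, xj) : ℝ × ℝ) (min δi δj) ∩ {y : ℝ × ℝ | 0 < y.1 ∧ 0 < y.2} ⊆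
      Metric.ball xi δi ×ˢ Metric.ball xj δj := by
    rw [← ball_prod_same]
    exact inter_subset_left.trans (prod_mono (Metric.ball_subset_ball (min_le_left _ _))
      (Metric.ball_subset_ball (min_le_right _ _)))
  refine ⟨min δi δj, lt_min hδi hδj,
    (hconvi.add_prod hconvj).subset hsub ((convex_ball _ _).inter
      ((convex_Ioi 0).prod (convex_Ioi 0))), fun y hy hne => add_pos_of_mem_prod_of_ne
        (logRatioIntegral_self _ _ _ _ _ _) (logRatioIntegral_self _ _ _ _ _ _) hposi hposj
        (hsub hy) hne⟩

/-- Lemma 4.2 (positive-definiteness part): for the two-species 1-dimensional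
mass-action system with reaction classes `L` (vector `ω = (wi, wj)`) and `R`
(vector `−ω`), the candidate Lyapunov function `f` has vanishing gradient at
the reaction vector balanced equilibrium `(xi*, xj*)`, its Hessian is the
stated diagonal matrix, and under the two sign conditions `f` is strictly
convex near the equilibrium and positive on a punctured neighborhood. -/
theorem two_species_lyapunov_positive_definite
    (ιL ιR : Type) [Fintype ιL] [Fintype ιR] [Nonempty ιL] [Nonempty ιR]
    (kL : ιL → ℝ) (kR : ιR → ℝ) (hkL : ∀ l, 0 < kL l) (hkR : ∀ l, 0 < kR l)
    (wi wj : ℤ) (hwi : wi ≠ 0) (hwj : wj ≠ 0)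
    (a b : ℕ) (vil : ιR → ℕ) (vjl : ιL → ℕ)
    (xi xj : ℝ) (hxi : 0 < xi) (hxj : 0 < xj)
    -- reaction vector balanced equilibrium
    (hbal : ∑ l, kL l * xi ^ a * xj ^ vjl l = ∑ l, kR l * xj ^ b * xi ^ vil l)
    (c : ℝ)
    (hc1 : c = xi ^ a / ∑ l, kR l * xi ^ vil l)
    (hc2 : c = xj ^ b / ∑ l, kL l * xj ^ vjl l)
    (f : ℝ × ℝ → ℝ)
    (hf : ∀ y : ℝ × ℝ, f y =
      -(∫ t in xi..y.1, (wi : ℝ)⁻¹ * Real.log (t ^ a / (c * ∑ l, kR l * t ^ vil l))) +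
      (∫ t in xj..y.2, (wj : ℝ)⁻¹ * Real.log (t ^ b / (c * ∑ l, kL l * t ^ vjl l)))) :
    f (xi, xj) = 0 ∧
    deriv (fun t => f (t, xj)) xi = 0 ∧
    deriv (fun t => f (xi, t)) xj = 0 ∧
    -- Hessian: diagonal with the stated entries
    (∀ y2 t : ℝ, 0 < t →
      deriv (deriv (fun s => f (s, y2))) t =
        -((wi : ℝ)⁻¹ * ∑ l, kR l * ((a : ℝ) - (vil l : ℝ)) * t ^ ((vil l : ℝ) - 1)) /
          (∑ l, kR l * t ^ vil l)) ∧
    (∀ y1 t : ℝ, 0 < t →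
      deriv (deriv (fun s => f (y1, s))) t =
        ((wj : ℝ)⁻¹ * ∑ l, kL l * ((b : ℝ) - (vjl l : ℝ)) * t ^ ((vjl l : ℝ) - 1)) /
          (∑ l, kL l * t ^ vjl l)) ∧
    (∀ y1 t : ℝ, deriv (fun s => deriv (fun s' => f (s', s)) t) y1 = 0) ∧
    -- strict convexity / positivity under the sign conditions
    ((wi : ℝ)⁻¹ * (∑ l, kR l * ((a : ℝ) - (vil l : ℝ)) * xi ^ ((vil l : ℝ) - 1)) < 0 →
     0 < (wj : ℝ)⁻¹ * (∑ l, kL l * ((b : ℝ) - (vjl l : ℝ)) * xj ^ ((vjl l : ℝ) - 1)) →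
     ∃ ε > 0,
       StrictConvexOn ℝ
         (Metric.ball ((xi, xj) : ℝ × ℝ) ε ∩ {y : ℝ × ℝ | 0 < y.1 ∧ 0 < y.2}) f ∧
       ∀ y ∈ Metric.ball ((xi, xj) : ℝ × ℝ) ε ∩ {y : ℝ × ℝ | 0 < y.1 ∧ 0 < y.2},
         y ≠ (xi, xj) → 0 < f y) :=
  two_species_lyapunov_positive_definite_general ιL ιR kL kR hkL hkR wi wj a b vil vjl xi xj hxi hxj
    c hc1 hc2 f hf
end

section
/- For the two-species dynamics ẋ_i = w_i(P(x) − Q(x)), ẋ_j = w_j(P(x) − Q(x)) with P(x) = Σ_{l∈L} k_l x_i^a x_j^{v_{jl}} and Q(x) = Σ_{l∈R} k_l x_j^b x_i^{v_{il}}, the time derivative of the Lyapunov candidate f defined in Lemma 4.2 along trajectories equals −ln(P(x)/Q(x)) · (P(x) − Q(x)), which is ≤ 0 for all x ∈ ℝ²_{>0} with equality iff P(x) = Q(x). -/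
open Set

lemma aux_sum_pos {ι : Type} [Fintype ι] [Nonempty ι] (k : ι → ℝ) (hk : ∀ l, 0 < k l)
    (v : ι → ℕ) {t : ℝ} (ht : 0 < t) : 0 < ∑ l, k l * t ^ v l :=
  Finset.sum_pos (fun l _ => mul_pos (hk l) (pow_pos ht _)) Finset.univ_nonempty

lemma aux_cont {ι : Type} [Fintype ι] [Nonempty ι] (k : ι → ℝ) (hk : ∀ l, 0 < k l)
    (n : ℕ) (v : ι → ℕ) (c w : ℝ) (hc : 0 < c) :
    ContinuousOn (fun t : ℝ => w⁻¹ * Real.log (t ^ n / (c * ∑ l, k l * t ^ v l)))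
      (Set.Ioi 0) := by
  apply continuousOn_const.mul
  apply ContinuousOn.log
  · apply ContinuousOn.div (by fun_prop) (by fun_prop)
    intro t ht
    have hs := aux_sum_pos k hk v (Set.mem_Ioi.mp ht)
    positivity
  · intro t ht
    have ht' : (0:ℝ) < t := ht
    have hs := aux_sum_pos k hk v ht'
    positivity

lemma aux_deriv {ι : Type} [Fintype ι] [Nonempty ι] (k : ι → ℝ) (hk : ∀ l, 0 < k l)
    (n : ℕ) (v : ι → ℕ) (c w : ℝ) (hc : 0 < c) {x0 t0 : ℝ} (hx0 : 0 < x0) (ht0 : 0 < t0) :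
    HasDerivAt (fun u => ∫ s in x0..u, w⁻¹ * Real.log (s ^ n / (c * ∑ l, k l * s ^ v l)))
      (w⁻¹ * Real.log (t0 ^ n / (c * ∑ l, k l * t0 ^ v l))) t0 := by
  have hcont := aux_cont k hk n v c w hc
  have hsub : Set.uIcc x0 t0 ⊆ Set.Ioi 0 := by
    intro s hs
    have := hs.1
    rcases le_total x0 t0 with h | h
    · exact lt_of_lt_of_le (lt_min hx0 ht0) hs.1
    · exact lt_of_lt_of_le (lt_min hx0 ht0) hs.1
  apply intervalIntegral.integral_hasDerivAt_right
  · exact (hcont.mono hsub).intervalIntegrable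
  · exact (hcont.stronglyMeasurableAtFilter isOpen_Ioi) t0 ht0
  · exact (hcont t0 ht0).continuousAt (isOpen_Ioi.mem_nhds ht0)

/-- Dissipativeness of the two-species Lyapunov candidate: along the vector
field `ẋ_i = w_i(P − Q)`, `ẋ_j = w_j(P − Q)` with
`P = ∑_{l∈L} k_l x_i^a x_j^{v_{jl}}` and `Q = ∑_{l∈R} k_l x_j^b x_i^{v_{il}}`,
the derivative of `f` equals `−ln(P/Q)·(P − Q) ≤ 0`, with equality iff
`P = Q`. -/
theorem two_species_lyapunov_dissipative
    (ιL ιR : Type) [Fintype ιL] [Fintype ιR] [Nonempty ιL] [Nonempty ιR]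
    (kL : ιL → ℝ) (kR : ιR → ℝ) (hkL : ∀ l, 0 < kL l) (hkR : ∀ l, 0 < kR l)
    (wi wj : ℤ) (hwi : wi ≠ 0) (hwj : wj ≠ 0)
    (a b : ℕ) (vil : ιR → ℕ) (vjl : ιL → ℕ)
    (xi xj : ℝ) (hxi : 0 < xi) (hxj : 0 < xj)
    (hbal : ∑ l, kL l * xi ^ a * xj ^ vjl l = ∑ l, kR l * xj ^ b * xi ^ vil l)
    (c : ℝ)
    (hc1 : c = xi ^ a / ∑ l, kR l * xi ^ vil l)
    (hc2 : c = xj ^ b / ∑ l, kL l * xj ^ vjl l)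
    (f : ℝ × ℝ → ℝ)
    (hf : ∀ y : ℝ × ℝ, f y =
      -(∫ t in xi..y.1, (wi : ℝ)⁻¹ * Real.log (t ^ a / (c * ∑ l, kR l * t ^ vil l))) +
      (∫ t in xj..y.2, (wj : ℝ)⁻¹ * Real.log (t ^ b / (c * ∑ l, kL l * t ^ vjl l)))) :
    ∀ x : ℝ × ℝ, 0 < x.1 → 0 < x.2 →
      let P := ∑ l, kL l * x.1 ^ a * x.2 ^ vjl l
      let Q := ∑ l, kR l * x.2 ^ b * x.1 ^ vil l
      deriv (fun t => f (t, x.2)) x.1 * ((wi : ℝ) * (P - Q)) +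
        deriv (fun t => f (x.1, t)) x.2 * ((wj : ℝ) * (P - Q)) =
        -Real.log (P / Q) * (P - Q) ∧
      -Real.log (P / Q) * (P - Q) ≤ 0 ∧
      (-Real.log (P / Q) * (P - Q) = 0 ↔ P = Q) := by
  intro x hx1 hx2 P Q
  have hc : 0 < c := by
    rw [hc1]
    have := aux_sum_pos kR hkR vil hxi
    positivity
  have hwi' : (wi : ℝ) ≠ 0 := Int.cast_ne_zero.mpr hwi
  have hwj' : (wj : ℝ) ≠ 0 := Int.cast_ne_zero.mpr hwj
  set SR := ∑ l, kR l * x.1 ^ vil l with hSR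
  set SL := ∑ l, kL l * x.2 ^ vjl l with hSL
  have hSRpos : 0 < SR := aux_sum_pos kR hkR vil hx1
  have hSLpos : 0 < SL := aux_sum_pos kL hkL vjl hx2
  have hP : P = x.1 ^ a * SL := by
    rw [hSL, Finset.mul_sum]
    exact Finset.sum_congr rfl fun l _ => by ring
  have hQ : Q = x.2 ^ b * SR := by
    rw [hSR, Finset.mul_sum]
    exact Finset.sum_congr rfl fun l _ => by ring
  have hPpos : 0 < P := by rw [hP]; positivity
  have hQpos : 0 < Q := by rw [hQ]; positivity
  set L1 := Real.log (x.1 ^ a / (c * SR)) with hL1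
  set L2 := Real.log (x.2 ^ b / (c * SL)) with hL2
  -- derivatives
  have hD1 : deriv (fun t => f (t, x.2)) x.1 = -((wi : ℝ)⁻¹ * L1) := by
    have heq : (fun t => f (t, x.2)) = fun t =>
        -(∫ s in xi..t, (wi : ℝ)⁻¹ * Real.log (s ^ a / (c * ∑ l, kR l * s ^ vil l))) +
        (∫ s in xj..x.2, (wj : ℝ)⁻¹ * Real.log (s ^ b / (c * ∑ l, kL l * s ^ vjl l))) :=
      funext fun t => hf (t, x.2)
    rw [heq]
    exact (((aux_deriv kR hkR a vil c (wi:ℝ) hc hxi hx1).neg).add_const _).deriv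
  have hD2 : deriv (fun t => f (x.1, t)) x.2 = (wj : ℝ)⁻¹ * L2 := by
    have heq : (fun t => f (x.1, t)) = fun t =>
        -(∫ s in xi..x.1, (wi : ℝ)⁻¹ * Real.log (s ^ a / (c * ∑ l, kR l * s ^ vil l))) +
        (∫ s in xj..t, (wj : ℝ)⁻¹ * Real.log (s ^ b / (c * ∑ l, kL l * s ^ vjl l))) :=
      funext fun t => hf (x.1, t)
    rw [heq]
    exact ((aux_deriv kL hkL b vjl c (wj:ℝ) hc hxj hx2).const_add _).deriv
  have hlog : Real.log (P / Q) = L1 - L2 := by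
    rw [hL1, hL2, ← Real.log_div (by positivity) (by positivity)]
    congr 1
    rw [hP, hQ]
    field_simp
  refine ⟨?_, ?_, ?_⟩
  · rw [hD1, hD2, hlog]
    field_simp
    ring
  · rcases le_total P Q with h | h
    · have h1 : Real.log (P / Q) ≤ 0 :=
        Real.log_nonpos (by positivity) ((div_le_one hQpos).mpr h)
      nlinarith
    · have h1 : 0 ≤ Real.log (P / Q) :=
        Real.log_nonneg ((one_le_div hQpos).mpr h)
      nlinarith
  · constructor
    · intro h
      rcases mul_eq_zero.mp h with h' | h'
      · have h'' : Real.log (P / Q) = 0 := by linarith [neg_eq_zero.mp h']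
        rcases Real.log_eq_zero.mp h'' with h3 | h3 | h3
        · exact absurd h3 (by positivity)
        · field_simp at h3; linarith
        · nlinarith [div_pos hPpos hQpos]
      · linarith [sub_eq_zero.mp h']
    · intro h
      rw [h]
      simp
end

section
/- If a mass-action system M decomposes into subsystems M^(0), …, M^(ℓ) whose reaction sets partition R (and species/complex sets union to those of M), where M^(0) is complex balanced at x*^(0) and each M^(p) (p ≥ 1) is reaction vector balanced at x*^(p), and all these equilibria agree on shared species (assembling into x* ∈ ℝ^n_{>0}), then x* is a generalized balanced equilibrium of M; in particular Σ_i k_i (x*)^{v_i}(v'_i − v_i) = 0. -/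
/-- If a mass-action system decomposes into subsystems whose reaction sets
partition `R`, where subsystem `0` is complex balanced at `x*` and each other
subsystem is reaction vector balanced at `x*` (the sub-equilibria agreeing on
shared species, i.e. all evaluated at the assembled `x*`), then `x*` is a
generalized balanced equilibrium of the full system; in particular it is an
equilibrium of the mass-action dynamics. -/
theorem decomposition_generalized_balanced
    (n ℓ : ℕ)
    (R : Finset ((Fin n → ℕ) × (Fin n → ℕ)))
    (sub : Fin (ℓ + 1) → Finset ((Fin n → ℕ) × (Fin n → ℕ)))
    (hunion : R = Finset.univ.biUnion sub)
    (hdisj : ∀ p q, p ≠ q → Disjoint (sub p) (sub q))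
    (k : (Fin n → ℕ) × (Fin n → ℕ) → ℝ) (hk : ∀ r ∈ R, 0 < k r)
    (xstar : Fin n → ℝ) (hx : ∀ j, 0 < xstar j)
    -- subsystem 0 is complex balanced at x*
    (hcb : ∀ z : Fin n → ℕ,
      ∑ r ∈ (sub 0).filter (fun r => r.1 = z), k r * ∏ j, xstar j ^ r.1 j =
      ∑ r ∈ (sub 0).filter (fun r => r.2 = z), k r * ∏ j, xstar j ^ r.1 j)
    -- each other subsystem is reaction vector balanced at x*
    (hrvb : ∀ p : Fin (ℓ + 1), p ≠ 0 → ∀ η : Fin n → ℤ,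
      ∑ r ∈ (sub p).filter (fun r => (fun j => (r.2 j : ℤ) - (r.1 j : ℤ)) = η),
        k r * ∏ j, xstar j ^ r.1 j =
      ∑ r ∈ (sub p).filter (fun r => (fun j => (r.2 j : ℤ) - (r.1 j : ℤ)) = -η),
        k r * ∏ j, xstar j ^ r.1 j) :
    -- generalized balancing of the full system at x*
    (∃ (A : Type) (L Rt : A → Finset ((Fin n → ℕ) × (Fin n → ℕ))),
      (∀ a, L a ⊆ R ∧ Rt a ⊆ R) ∧
      (∀ r ∈ R, ∃ a, r ∈ L a) ∧ (∀ r ∈ R, ∃ a, r ∈ Rt a) ∧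
      (∀ a, ∑ r ∈ L a, k r * ∏ j, xstar j ^ r.1 j =
            ∑ r ∈ Rt a, k r * ∏ j, xstar j ^ r.1 j)) ∧
    -- in particular, x* is an equilibrium
    (∀ j, ∑ r ∈ R, k r * (∏ m, xstar m ^ r.1 m) * ((r.2 j : ℝ) - (r.1 j : ℝ)) = 0) := by
  have hsub : ∀ p, sub p ⊆ R := by
    intro p r hr; rw [hunion]; exact Finset.mem_biUnion.2 ⟨p, Finset.mem_univ _, hr⟩
  set v : ((Fin n → ℕ) × (Fin n → ℕ)) → ℝ := fun r => k r * ∏ j, xstar j ^ r.1 j with hv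
  constructor
  · -- generalized balancing
    refine ⟨(Fin n → ℕ) ⊕ (Fin (ℓ+1) × (Fin n → ℤ)),
      (fun a => match a with
        | Sum.inl z => (sub 0).filter (fun r => r.1 = z)
        | Sum.inr (p, η) => if p = 0 then ∅ else
            (sub p).filter (fun r => (fun j => (r.2 j : ℤ) - (r.1 j : ℤ)) = η)),
      (fun a => match a with
        | Sum.inl z => (sub 0).filter (fun r => r.2 = z)
        | Sum.inr (p, η) => if p = 0 then ∅ else
            (sub p).filter (fun r => (fun j => (r.2 j : ℤ) - (r.1 j : ℤ)) = -η)),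
      ?_, ?_, ?_, ?_⟩
    · rintro (z | ⟨p, η⟩)
      · exact ⟨(Finset.filter_subset _ _).trans (hsub 0),
               (Finset.filter_subset _ _).trans (hsub 0)⟩
      · by_cases hp : p = 0
        · simp [hp]
        · simp only [if_neg hp]
          exact ⟨(Finset.filter_subset _ _).trans (hsub p),
                 (Finset.filter_subset _ _).trans (hsub p)⟩
    · intro r hr
      rw [hunion] at hr
      obtain ⟨p, -, hp⟩ := Finset.mem_biUnion.1 hr
      by_cases h0 : p = 0
      · exact ⟨Sum.inl r.1, Finset.mem_filter.2 ⟨h0 ▸ hp, rfl⟩⟩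
      · refine ⟨Sum.inr (p, fun j => (r.2 j : ℤ) - (r.1 j : ℤ)), ?_⟩
        simp only [if_neg h0]
        exact Finset.mem_filter.2 ⟨hp, rfl⟩
    · intro r hr
      rw [hunion] at hr
      obtain ⟨p, -, hp⟩ := Finset.mem_biUnion.1 hr
      by_cases h0 : p = 0
      · exact ⟨Sum.inl r.2, Finset.mem_filter.2 ⟨h0 ▸ hp, rfl⟩⟩
      · refine ⟨Sum.inr (p, -(fun j => (r.2 j : ℤ) - (r.1 j : ℤ))), ?_⟩
        simp only [if_neg h0, neg_neg]
        exact Finset.mem_filter.2 ⟨hp, rfl⟩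
    · rintro (z | ⟨p, η⟩)
      · exact hcb z
      · by_cases hp : p = 0
        · simp [hp]
        · simp only [if_neg hp]
          exact hrvb p hp η
  · -- equilibrium
    intro j
    rw [hunion, Finset.sum_biUnion (fun p _ q _ h => hdisj p q h)]
    refine Finset.sum_eq_zero fun p _ => ?_
    by_cases h0 : p = 0
    · subst h0
      -- complex balanced case
      set Z : Finset (Fin n → ℕ) :=
        (sub 0).image Prod.fst ∪ (sub 0).image Prod.snd with hZ
      have grp : ∀ g : ((Fin n → ℕ) × (Fin n → ℕ)) → (Fin n → ℕ),
          (∀ r ∈ sub 0, g r ∈ Z) →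
          ∑ r ∈ sub 0, v r * (g r j : ℝ) =
          ∑ z ∈ Z, (z j : ℝ) * ∑ r ∈ (sub 0).filter (fun r => g r = z), v r := by
        intro g hg
        rw [← Finset.sum_fiberwise_of_maps_to hg (fun r => v r * (g r j : ℝ))]
        refine Finset.sum_congr rfl fun z _ => ?_
        rw [Finset.mul_sum]
        refine Finset.sum_congr rfl fun r hr => ?_
        have := (Finset.mem_filter.1 hr).2
        rw [this]; ring
      have h1 : ∀ r ∈ sub 0, r.1 ∈ Z := fun r hr =>
        Finset.mem_union_left _ (Finset.mem_image_of_mem _ hr)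
      have h2 : ∀ r ∈ sub 0, r.2 ∈ Z := fun r hr =>
        Finset.mem_union_right _ (Finset.mem_image_of_mem _ hr)
      have : ∑ r ∈ sub 0, v r * ((r.2 j : ℝ) - (r.1 j : ℝ)) = 0 := by
        have e : ∀ r ∈ sub 0, v r * ((r.2 j : ℝ) - (r.1 j : ℝ)) =
            v r * (r.2 j : ℝ) - v r * (r.1 j : ℝ) := fun r _ => by ring
        rw [Finset.sum_congr rfl e, Finset.sum_sub_distrib,
          grp (fun r => r.2) h2, grp (fun r => r.1) h1]
        rw [← Finset.sum_sub_distrib]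
        refine Finset.sum_eq_zero fun z _ => ?_
        rw [← (hcb z)]
        ring
      simpa [hv, mul_assoc, mul_comm, mul_left_comm] using this
    · -- reaction vector balanced case
      set d : ((Fin n → ℕ) × (Fin n → ℕ)) → (Fin n → ℤ) :=
        fun r => fun j => (r.2 j : ℤ) - (r.1 j : ℤ) with hd
      set T : Finset (Fin n → ℤ) :=
        (sub p).image d ∪ ((sub p).image d).image Neg.neg with hT
      have hmem : ∀ r ∈ sub p, d r ∈ T := fun r hr =>
        Finset.mem_union_left _ (Finset.mem_image_of_mem _ hr)
      have hnegT : ∀ η ∈ T, -η ∈ T := by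
        intro η hη
        rcases Finset.mem_union.1 hη with h | h
        · exact Finset.mem_union_right _ (Finset.mem_image_of_mem _ h)
        · obtain ⟨η', hη', rfl⟩ := Finset.mem_image.1 h
          show -(-η') ∈ T
          rw [neg_neg]
          exact Finset.mem_union_left _ hη'
      have hA : ∀ η : Fin n → ℤ,
          ∑ r ∈ (sub p).filter (fun r => d r = η), v r =
          ∑ r ∈ (sub p).filter (fun r => d r = -η), v r := hrvb p h0
      have key : ∑ r ∈ sub p, v r * ((r.2 j : ℝ) - (r.1 j : ℝ)) = 0 := by
        have e1 : ∑ r ∈ sub p, v r * ((r.2 j : ℝ) - (r.1 j : ℝ)) =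
            ∑ η ∈ T, (η j : ℝ) * ∑ r ∈ (sub p).filter (fun r => d r = η), v r := by
          rw [← Finset.sum_fiberwise_of_maps_to hmem
            (fun r => v r * ((r.2 j : ℝ) - (r.1 j : ℝ)))]
          refine Finset.sum_congr rfl fun η _ => ?_
          rw [Finset.mul_sum]
          refine Finset.sum_congr rfl fun r hr => ?_
          have h2 := (Finset.mem_filter.1 hr).2
          have : ((r.2 j : ℝ) - (r.1 j : ℝ)) = (η j : ℝ) := by
            rw [← h2]; simp [hd]
          rw [this]; ring
        have e2 : ∑ η ∈ T, (η j : ℝ) * ∑ r ∈ (sub p).filter (fun r => d r = η), v r =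
            ∑ η ∈ T, -((η j : ℝ) * ∑ r ∈ (sub p).filter (fun r => d r = η), v r) := by
          refine Finset.sum_nbij' (fun η => -η) (fun η => -η) hnegT hnegT
            (fun a _ => neg_neg a) (fun a _ => neg_neg a) ?_
          intro η hη
          rw [← hA η]
          simp only [Pi.neg_apply, Int.cast_neg]
          ring
        rw [Finset.sum_neg_distrib] at e2
        rw [e1]
        linarith [e1, e2]
      simpa [hv, mul_assoc, mul_comm, mul_left_comm] using key
end

section
/- For an autocatalytic mass-action system whose reactions partition into pairs (R_{i,j}, R_{j,i}) of two-species autocatalytic subsystems satisfying the proportional-rates condition (condition (3) of the autocatalytic definition), a point x* ∈ ℝ^n_{>0} is reaction vector balanced in the full system if and only if each projected point (x*_i, x*_j) is reaction vector balanced in the corresponding two-species subsystem. -/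
lemma single_pair_eq {n : ℕ} {i j i' j' : Fin n} (hij : i ≠ j)
    (h : (Pi.single j 1 - Pi.single i 1 : Fin n → ℤ) =
      Pi.single j' 1 - Pi.single i' 1) : i = i' ∧ j = j' := by
  have hj := congrFun h j
  have hi := congrFun h i
  simp only [Pi.sub_apply, Pi.single_apply] at hj hi
  split_ifs at hj hi <;> simp_all <;> omega

lemma single_pair_ne_zero {n : ℕ} {i j : Fin n} (hij : i ≠ j) :
    (Pi.single j 1 - Pi.single i 1 : Fin n → ℤ) ≠ 0 := by
  intro h
  have hj := congrFun h j
  simp only [Pi.sub_apply, Pi.single_apply, Pi.zero_apply] at hj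
  split_ifs at hj <;> simp_all

lemma sum_ite_single_pair {n : ℕ} (A : Fin n → Fin n → Finset ℕ)
    (k : Fin n → Fin n → ℕ → ℝ) (hdiag : ∀ i, A i i = ∅) (xstar : Fin n → ℝ)
    {i₀ j₀ : Fin n} (hij : i₀ ≠ j₀) :
    (∑ i, ∑ j,
        if (Pi.single j 1 - Pi.single i 1 : Fin n → ℤ) =
            (Pi.single j₀ 1 - Pi.single i₀ 1 : Fin n → ℤ) then
          ∑ α ∈ A i j, k i j α * xstar i * xstar j ^ (α - 1) else 0) =
      ∑ α ∈ A i₀ j₀, k i₀ j₀ α * xstar i₀ * xstar j₀ ^ (α - 1) := by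
  rw [Finset.sum_eq_single i₀]
  · rw [Finset.sum_eq_single j₀]
    · rw [if_pos rfl]
    · intro j _ hj
      rw [if_neg]
      intro h
      exact hj (single_pair_eq (fun hh : i₀ = j => by
        subst hh; exact (single_pair_ne_zero hij) (by
          simpa using h.symm)) h).2
    · intro h; exact absurd (Finset.mem_univ j₀) h
  · intro i _ hi
    apply Finset.sum_eq_zero
    intro j _
    by_cases hij' : i = j
    · subst hij'; simp [hdiag]
    · rw [if_neg]
      intro h
      exact hi (single_pair_eq hij' h).1
  · intro h; exact absurd (Finset.mem_univ i₀) h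

/-- Property 5.1: for an autocatalytic mass-action system decomposed into
two-species autocatalytic subsystems along the pairs `(R_{i,j}, R_{j,i})`
(satisfying the proportional-rates condition), a positive point `x*` is
reaction vector balanced in the full system iff each projection is reaction
vector balanced in the corresponding two-species subsystem. -/
theorem autocatalytic_rvb_iff_pairwise_rvb
    (n : ℕ) (A : Fin n → Fin n → Finset ℕ)
    (k : Fin n → Fin n → ℕ → ℝ)
    (hdiag : ∀ i, A i i = ∅)
    (hpos : ∀ i j, ∀ α ∈ A i j, 0 < k i j α ∧ 1 ≤ α)
    (hprop : ∀ i l j, (A i j).Nonempty → (A l j).Nonempty →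
      A i j = A l j ∧ ∃ c > 0, ∀ α, k l j α = c * k i j α)
    (xstar : Fin n → ℝ) (hx : ∀ j, 0 < xstar j) :
    (∀ η : Fin n → ℤ, η ≠ 0 →
      (∑ i, ∑ j,
        if (Pi.single j 1 - Pi.single i 1 : Fin n → ℤ) = η then
          ∑ α ∈ A i j, k i j α * xstar i * xstar j ^ (α - 1) else 0) =
      (∑ i, ∑ j,
        if (Pi.single j 1 - Pi.single i 1 : Fin n → ℤ) = -η then
          ∑ α ∈ A i j, k i j α * xstar i * xstar j ^ (α - 1) else 0)) ↔
    (∀ i j : Fin n, i ≠ j →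
      ∑ α ∈ A i j, k i j α * xstar i * xstar j ^ (α - 1) =
      ∑ α ∈ A j i, k j i α * xstar j * xstar i ^ (α - 1)) := by
  constructor
  · intro H i j hij
    have h := H (Pi.single j 1 - Pi.single i 1) (single_pair_ne_zero hij)
    rw [sum_ite_single_pair A k hdiag xstar hij] at h
    have hneg : -(Pi.single j 1 - Pi.single i 1 : Fin n → ℤ) =
        Pi.single i 1 - Pi.single j 1 := by ring
    rw [hneg, sum_ite_single_pair A k hdiag xstar hij.symm] at h
    exact h
  · intro H η hη
    by_cases hrep : ∃ i j : Fin n, i ≠ j ∧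
        (Pi.single j 1 - Pi.single i 1 : Fin n → ℤ) = η
    · obtain ⟨i₀, j₀, hij, hrep⟩ := hrep
      subst hrep
      rw [sum_ite_single_pair A k hdiag xstar hij]
      have hneg : -(Pi.single j₀ 1 - Pi.single i₀ 1 : Fin n → ℤ) =
          Pi.single i₀ 1 - Pi.single j₀ 1 := by ring
      rw [hneg, sum_ite_single_pair A k hdiag xstar hij.symm]
      exact H i₀ j₀ hij
    · push_neg at hrep
      have z1 : (∑ i, ∑ j,
          if (Pi.single j 1 - Pi.single i 1 : Fin n → ℤ) = η then
            ∑ α ∈ A i j, k i j α * xstar i * xstar j ^ (α - 1) else 0) = 0 := by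
        apply Finset.sum_eq_zero; intro i _
        apply Finset.sum_eq_zero; intro j _
        by_cases hij : i = j
        · subst hij; simp [hdiag]
        · rw [if_neg (hrep i j hij)]
      have z2 : (∑ i, ∑ j,
          if (Pi.single j 1 - Pi.single i 1 : Fin n → ℤ) = -η then
            ∑ α ∈ A i j, k i j α * xstar i * xstar j ^ (α - 1) else 0) = 0 := by
        apply Finset.sum_eq_zero; intro i _
        apply Finset.sum_eq_zero; intro j _
        by_cases hij : i = j
        · subst hij; simp [hdiag]
        · rw [if_neg]
          intro h
          exact hrep j i (Ne.symm hij) (by rw [← neg_neg η, ← h]; ring)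
      rw [z1, z2]
end
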